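/- Let T be a rigid object in C. Then ^⊥(T^⊥) = add T = (^⊥T)^⊥, where for a full subcategory X, X^⊥ = {Y ∈ C : Hom_C(X', ΣY) = 0 for all X' ∈ X} and ^⊥X = {Y ∈ C : Hom_C(Y, ΣX') = 0 for all X' ∈ X}. -/

import Mathlib

/-!
Common setup: `C` is a Hom-finite, Krull-Schmidt (= idempotent complete, given
Hom-finiteness over a field), `k`-linear triangulated category with suspension
functor `Σ = shiftFunctor C (1 : ℤ)`, and `T` is a rigid object of `C`.
-/

noncomputable section

open CategoryTheory CategoryTheory.Limits CategoryTheory.Pretriangulated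

universe v u

namespace PaperBM

instance moduleEndLeftOp {C : Type u} [Category.{v} C] [Preadditive C] {X Y : C} : Module (End (Opposite.op X)) (X ⟶ Y) where
  smul r f := r.unop ≫ f
  one_smul _ := Category.id_comp _
  mul_smul _ _ _ := Category.assoc _ _ _
  smul_add _ _ _ := Preadditive.comp_add _ _ _ _ _ _
  smul_zero _ := Limits.comp_zero
  add_smul _ _ _ := Preadditive.add_comp _ _ _ _ _ _
  zero_smul _ := Limits.zero_comp

variable {C : Type u} [Category.{v} C] [Preadditive C] [HasZeroObject C]
  [HasShift C ℤ] [∀ n : ℤ, (shiftFunctor C n).Additive] [Pretriangulated C]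
  [HasFiniteBiproducts C]

/-- `X` lies in `add T`: it is a direct summand of a finite direct sum of copies of `T`. -/
def memAdd (T X : C) : Prop :=
  ∃ (n : ℕ) (s : X ⟶ ⨁ (fun _ : Fin n => T)) (r : (⨁ fun _ : Fin n => T) ⟶ X), s ≫ r = 𝟙 X

/-- `T` is rigid: `Hom_C(T, ΣT) = 0`. -/
def IsRigidObj (T : C) : Prop := ∀ f : T ⟶ (shiftFunctor C (1 : ℤ)).obj T, f = 0

/-- `Y ∈ T^⊥`, i.e. `Hom_C(X, ΣY) = 0` for all `X ∈ add T`. -/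
def memTperp (T Y : C) : Prop :=
  ∀ (X : C), memAdd T X → ∀ f : X ⟶ (shiftFunctor C (1 : ℤ)).obj Y, f = 0

/-- `Y ∈ ⊥T`, i.e. `Hom_C(Y, ΣX) = 0` for all `X ∈ add T`. -/
def memPerpT (T Y : C) : Prop :=
  ∀ (X : C), memAdd T X → ∀ f : Y ⟶ (shiftFunctor C (1 : ℤ)).obj X, f = 0

/-- `Y ∈ ΣT^⊥`, the image of `T^⊥` under the suspension `Σ`. -/
def memSigmaTperp (T Y : C) : Prop :=
  ∃ Z : C, memTperp T Z ∧ Nonempty (Y ≅ (shiftFunctor C (1 : ℤ)).obj Z)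

/-- The map `f` factors through an object belonging to the class `P` of objects. -/
def FactorsThru (P : C → Prop) {A B : C} (f : A ⟶ B) : Prop :=
  ∃ (Z : C) (g : A ⟶ Z) (h : Z ⟶ B), P Z ∧ g ≫ h = f

/-- The class `S̃` of maps `f : X ⟶ Y` such that in a completion
`Σ⁻¹Z →h X →f Y →g Z` of `f` to a triangle (where `A` plays the role of `Σ⁻¹Z`,
so that `Z = ΣA`), both `g` and `h` factor through an object of `ΣT^⊥`. -/
def Stilde (T : C) : MorphismProperty C := fun X Y f =>
  ∃ (A : C) (h : A ⟶ X) (g : Y ⟶ (shiftFunctor C (1 : ℤ)).obj A),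
    (Triangle.mk h f g ∈ distTriang C) ∧
    FactorsThru (memSigmaTperp T) g ∧ FactorsThru (memSigmaTperp T) h

/-- The class `S` of maps `f : X ⟶ Y` such that in a completion
`Σ⁻¹Z →h X →f Y →g Z` of `f` to a triangle (where `A` plays the role of `Σ⁻¹Z`,
so that `Z = ΣA`), `g` factors through an object of `ΣT^⊥` and `Σ⁻¹Z ∈ ΣT^⊥`. -/
def Sclass (T : C) : MorphismProperty C := fun X Y f =>
  ∃ (A : C) (h : A ⟶ X) (g : Y ⟶ (shiftFunctor C (1 : ℤ)).obj A),
    (Triangle.mk h f g ∈ distTriang C) ∧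
    FactorsThru (memSigmaTperp T) g ∧ memSigmaTperp T A

/-- `X ∈ C(T)`: there is a triangle `T₁ → T₀ → X → ΣT₁` with `T₀, T₁ ∈ add T`. -/
def memCT (T X : C) : Prop :=
  ∃ (T₁ T₀ : C) (a : T₁ ⟶ T₀) (b : T₀ ⟶ X) (c : X ⟶ (shiftFunctor C (1 : ℤ)).obj T₁),
    memAdd T T₁ ∧ memAdd T T₀ ∧ (Triangle.mk a b c ∈ distTriang C)

/-- `f : X₀ ⟶ Y` is a right `P`-approximation of `Y`. -/
def IsRightApprox (P : C → Prop) {X₀ Y : C} (f : X₀ ⟶ Y) : Prop :=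
  P X₀ ∧ ∀ (W : C), P W → ∀ g : W ⟶ Y, ∃ g' : W ⟶ X₀, g' ≫ f = g

/-- `f : Y ⟶ X₀` is a left `P`-approximation of `Y`. -/
def IsLeftApprox (P : C → Prop) {Y X₀ : C} (f : Y ⟶ X₀) : Prop :=
  P X₀ ∧ ∀ (W : C), P W → ∀ g : Y ⟶ W, ∃ g' : X₀ ⟶ W, f ≫ g' = g

/-- The map `f : X₀ ⟶ Y` is right minimal. -/
def IsRightMinimal {X₀ Y : C} (f : X₀ ⟶ Y) : Prop :=
  ∀ g : X₀ ⟶ X₀, g ≫ f = f → IsIso g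

/-- The functor `H = Hom_C(T, -) : C ⥤ Mod End_C(T)ᵒᵖ`.  Here, with Mathlib's
conventions, the endomorphism ring `End (Opposite.op T)` of `T` viewed in `Cᵒᵖ` plays
the role of `End_C(T)ᵒᵖ`, so that each `Hom_C(T, X)` is a left module over it. -/
abbrev homFunctor (T : C) : C ⥤ ModuleCat.{v} (End (Opposite.op T)) where
  obj Y := ModuleCat.of _ (T ⟶ Y)
  map f := ModuleCat.ofHom
    { toFun := fun g => g ≫ f
      map_add' := fun _ _ => Preadditive.add_comp _ _ _ _ _ _
      map_smul' := fun _ _ => Category.assoc _ _ _ }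

/-- The predicate on `End_C(T)ᵒᵖ`-modules of being finite-dimensional (equivalently,
since `End_C(T)` is a finite-dimensional algebra, finitely generated). -/
abbrev isFinDim (T : C) : ModuleCat.{v} (End (Opposite.op T)) → Prop :=
  fun M => Module.Finite (End (Opposite.op T)) M

/-- The category `mod End_C(T)ᵒᵖ` of finite-dimensional `End_C(T)ᵒᵖ`-modules. -/
abbrev fdMod (T : C) := ObjectProperty.FullSubcategory (isFinDim T)

/-- The ideal relation on `C(T)` of maps factoring through an object of `ΣT^⊥`. -/
def homRelCT (T : C) : HomRel (ObjectProperty.FullSubcategory (memCT T)) :=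
  fun A B f g => FactorsThru (memSigmaTperp T) ((f.hom - g.hom : A.obj ⟶ B.obj))

/-- The ideal relation on `C(T)` of maps factoring through an object of `add ΣT`. -/
def homRelCTadd (T : C) : HomRel (ObjectProperty.FullSubcategory (memCT T)) :=
  fun A B f g => FactorsThru (memAdd ((shiftFunctor C (1 : ℤ)).obj T)) ((f.hom - g.hom : A.obj ⟶ B.obj))

/-- The ideal relation on `C` of maps factoring through an object of `add ΣT`. -/
def homRelAdd (T : C) : HomRel C :=
  fun A B f g => FactorsThru (memAdd ((shiftFunctor C (1 : ℤ)).obj T)) (f - g)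

end PaperBM

open PaperBM

/-!
Let `p : X ⟶ Y` be a right `add T`-approximation and complete it to a triangle
`A → X → Y → ΣA`. A map `T ⟶ ΣA` dies in `ΣX` by rigidity, so it factors through `Y ⟶ ΣA`,
and then through `p`, hence vanishes: `A ∈ T^⊥`. If `Y ∈ ^⊥(T^⊥)`, the map `Y ⟶ ΣA` is
therefore zero, the triangle splits and `Y` is a summand of `X`. The equality
`add T = (^⊥T)^⊥` is the dual argument with a left approximation `Y ⟶ X`.
-/

namespace PaperBM

section

variable {C : Type u} [Category.{v} C] [Preadditive C] [HasFiniteBiproducts C]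

lemma memAdd_biproduct (T : C) (n : ℕ) : memAdd T (⨁ fun _ : Fin n => T) :=
  ⟨n, 𝟙 _, 𝟙 _, Category.id_comp _⟩

lemma memAdd.of_retract {T X Y : C} (hX : memAdd T X) (s : Y ⟶ X) (r : X ⟶ Y)
    (hsr : s ≫ r = 𝟙 Y) : memAdd T Y := by
  obtain ⟨n, s', r', hsr'⟩ := hX
  exact ⟨n, s ≫ s', r' ≫ r, by simp [reassoc_of% hsr', hsr]⟩

lemma memAdd.hom_eq_zero {T X Z : C} (hX : memAdd T X) (hT : ∀ u : T ⟶ Z, u = 0)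
    (f : X ⟶ Z) : f = 0 := by
  obtain ⟨n, s, r, hsr⟩ := hX
  have hr : r ≫ f = 0 := biproduct.hom_ext' _ _ fun j => by rw [comp_zero]; exact hT _
  rw [← Category.id_comp f, ← hsr, Category.assoc, hr, comp_zero]

lemma memAdd.hom_map_eq_zero {D : Type*} [Category D] [Preadditive D] (F : C ⥤ D) [F.Additive]
    {T X : C} {A : D} (hX : memAdd T X) (hT : ∀ u : A ⟶ F.obj T, u = 0)
    (f : A ⟶ F.obj X) : f = 0 := by
  obtain ⟨n, s, r, hsr⟩ := hX
  have hs : f ≫ F.map s = 0 := by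
    rw [← Category.comp_id (f ≫ F.map s), ← F.map_id, ← biproduct.total, F.map_sum,
      Preadditive.comp_sum]
    exact Finset.sum_eq_zero fun j _ => by
      rw [F.map_comp, ← Category.assoc, hT ((f ≫ F.map s) ≫ F.map (biproduct.π _ j)), zero_comp]
  rw [← Category.comp_id f, ← F.map_id, ← hsr, F.map_comp, ← Category.assoc, hs, zero_comp]

end

section

variable {C : Type u} [Category.{v} C] [Preadditive C] [HasFiniteBiproducts C]
  (k : Type*) [Field k] [Linear k C]

lemma exists_biproduct_rightApprox (T Y : C) [FiniteDimensional k (T ⟶ Y)] :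
    ∃ (n : ℕ) (p : (⨁ fun _ : Fin n => T) ⟶ Y), ∀ q : T ⟶ Y, ∃ q', q' ≫ p = q := by
  let b := Module.finBasis k (T ⟶ Y)
  refine ⟨_, biproduct.desc fun i => b i, fun q =>
    ⟨∑ i, b.repr q i • biproduct.ι (fun _ => T) i, ?_⟩⟩
  simpa only [Preadditive.sum_comp, Linear.smul_comp, biproduct.ι_desc] using b.sum_repr q

lemma exists_biproduct_leftApprox (T Y : C) [FiniteDimensional k (Y ⟶ T)] :
    ∃ (n : ℕ) (p : Y ⟶ ⨁ fun _ : Fin n => T), ∀ q : Y ⟶ T, ∃ q', p ≫ q' = q := by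
  let b := Module.finBasis k (Y ⟶ T)
  refine ⟨_, biproduct.lift fun i => b i, fun q =>
    ⟨∑ i, b.repr q i • biproduct.π (fun _ => T) i, ?_⟩⟩
  simpa only [Preadditive.comp_sum, Linear.comp_smul, biproduct.lift_π] using b.sum_repr q

end

variable {C : Type u} [Category.{v} C] [Preadditive C] [HasZeroObject C]
  [HasShift C ℤ] [∀ n : ℤ, (shiftFunctor C n).Additive] [Pretriangulated C]
  [HasFiniteBiproducts C]

lemma memTperp_of_distTriang {T A X Y : C} (hT : IsRigidObj T) (hX : memAdd T X)
    {h : A ⟶ X} {p : X ⟶ Y} {g : Y ⟶ A⟦(1 : ℤ)⟧} (hd : Triangle.mk h p g ∈ distTriang C)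
    (hp : ∀ q : T ⟶ Y, ∃ q', q' ≫ p = q) : memTperp T A := by
  intro X' hX' f
  refine hX'.hom_eq_zero (fun u => ?_) f
  obtain ⟨v, rfl⟩ := Triangle.coyoneda_exact₁ _ hd u
    (hX.hom_map_eq_zero (shiftFunctor C (1 : ℤ)) hT _)
  obtain ⟨w, rfl⟩ := hp v
  have hpg : p ≫ g = 0 := comp_distTriang_mor_zero₂₃ _ hd
  exact (Category.assoc w p g).trans (by rw [hpg, comp_zero])

lemma memPerpT_of_distTriang {T W X Y : C} (hT : IsRigidObj T) (hX : memAdd T X)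
    {p : Y ⟶ X} {g : X ⟶ W} {h : W ⟶ Y⟦(1 : ℤ)⟧} (hd : Triangle.mk p g h ∈ distTriang C)
    (hp : ∀ q : Y ⟶ T, ∃ q', p ≫ q' = q) : memPerpT T W := by
  intro X' hX' f
  refine hX'.hom_map_eq_zero (shiftFunctor C (1 : ℤ)) (fun u => ?_) f
  obtain ⟨v, rfl⟩ := Triangle.yoneda_exact₃ _ hd u (hX.hom_eq_zero hT _)
  obtain ⟨w, hw⟩ := hp ((shiftFunctor C (1 : ℤ)).preimage v)
  have hv : (shiftFunctor C (1 : ℤ)).map p ≫ (shiftFunctor C (1 : ℤ)).map w = v := by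
    rw [← Functor.map_comp, hw]
    exact Functor.map_preimage _ v
  have hhp : h ≫ (shiftFunctor C (1 : ℤ)).map p = 0 := comp_distTriang_mor_zero₃₁ _ hd
  rw [← hv]
  exact (Category.assoc h _ _).symm.trans (by rw [hhp, zero_comp])

lemma memAdd_of_forall_memTperp (k : Type*) [Field k] [Linear k C] {T Y : C}
    [FiniteDimensional k (T ⟶ Y)] (hT : IsRigidObj T)
    (hY : ∀ Z : C, memTperp T Z → ∀ u : Y ⟶ Z⟦(1 : ℤ)⟧, u = 0) : memAdd T Y := by
  obtain ⟨n, p, hp⟩ := exists_biproduct_rightApprox k T Y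
  obtain ⟨A, h, g, hd⟩ := distinguished_cocone_triangle₁ p
  have hg : g = 0 := hY A (memTperp_of_distTriang hT (memAdd_biproduct T n) hd hp) g
  obtain ⟨s, hs⟩ := Triangle.coyoneda_exact₃ _ hd (𝟙 Y) (by rw [hg]; exact comp_zero)
  exact (memAdd_biproduct T n).of_retract s p hs.symm

lemma memAdd_of_forall_memPerpT (k : Type*) [Field k] [Linear k C] {T Y : C}
    [FiniteDimensional k (Y ⟶ T)] (hT : IsRigidObj T)
    (hY : ∀ Z : C, memPerpT T Z → ∀ u : Z ⟶ Y⟦(1 : ℤ)⟧, u = 0) : memAdd T Y := by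
  obtain ⟨n, p, hp⟩ := exists_biproduct_leftApprox k T Y
  obtain ⟨W, g, h, hd⟩ := distinguished_cocone_triangle p
  have hh : h = 0 := hY W (memPerpT_of_distTriang hT (memAdd_biproduct T n) hd hp) h
  obtain ⟨e, he, -⟩ : ∃ e : (⨁ fun _ : Fin n => T) ≅ Y ⊞ W, p ≫ e.hom = biprod.inl ∧ _ :=
    exists_iso_binaryBiproduct_of_distTriang _ hd hh
  exact (memAdd_biproduct T n).of_retract p (e.hom ≫ biprod.fst) (by simp [reassoc_of% he])

end PaperBM

/-- For a rigid object `T`, we have `^⊥(T^⊥) = add T = (^⊥T)^⊥`. -/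
theorem statement_3 {C : Type u} [Category.{v} C] [Preadditive C] [HasZeroObject C]
    [HasShift C ℤ] [∀ n : ℤ, (shiftFunctor C n).Additive] [Pretriangulated C]
    [HasFiniteBiproducts C]
    {k : Type*} [Field k] [CategoryTheory.Linear k C]
    [∀ X Y : C, FiniteDimensional k (X ⟶ Y)] [IsIdempotentComplete C]
    (T : C) (hT : IsRigidObj T) :
    (∀ Y : C,
      (∀ Z : C, memTperp T Z → ∀ u : Y ⟶ (shiftFunctor C (1 : ℤ)).obj Z, u = 0) ↔
        memAdd T Y) ∧
    (∀ Y : C,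
      memAdd T Y ↔
        (∀ Z : C, memPerpT T Z → ∀ u : Z ⟶ (shiftFunctor C (1 : ℤ)).obj Y, u = 0)) :=
  ⟨fun _ => ⟨memAdd_of_forall_memTperp k hT, fun hY _ hZ => hZ _ hY⟩,
    fun _ => ⟨fun hY _ hZ => hZ _ hY, memAdd_of_forall_memPerpT k hT⟩⟩
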